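/- For the Weyl Hamiltonian H(p) = ½ p·σ, the matrix elements D^k_{+−}(ω) = ⟨Ψ_+(ω), ½σ_k Ψ_−(ω)⟩ satisfy ∫_{S²} ω^j D^k_{+−}(ω) D^l_{−+}(ω) dω = (iπ/3) ε_{jkl}, where ε_{jkl} is the Levi-Civita symbol, for all j,k,l ∈ {1,2,3}. -/

import Mathlib

open Matrix Complex MeasureTheory

noncomputable section

def pauli : Fin 3 → Matrix (Fin 2) (Fin 2) ℂ :=
  ![!![0, 1; 1, 0], !![0, -Complex.I; Complex.I, 0], !![1, 0; 0, -1]]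

/-- The Levi-Civita symbol on `{0,1,2}` (with `ε_{012} = 1`), via the closed formula
`ε_{jkl} = (k−j)(l−k)(l−j)/2`. -/
def leviCivita (j k l : Fin 3) : ℝ :=
  (((k : ℤ) - (j : ℤ)) * ((l : ℤ) - (k : ℤ)) * ((l : ℤ) - (j : ℤ)) : ℤ) / 2

/-- The surface measure on the unit sphere `S² ⊂ ℝ³`. -/
def sphereMeasure : Measure (Metric.sphere (0 : EuclideanSpace ℝ (Fin 3)) 1) :=
  (volume : Measure (EuclideanSpace ℝ (Fin 3))).toSphere

/-!
Since `ω·σ` squares to the identity and has eigenvalues `±1`, the eigenprojections are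
`Ψ_± Ψ_±* = ½ (1 ± ω·σ)`, whatever the phases. Hence
`D^k_{+−} D^l_{−+} = ¼ tr (P_+ σ_k P_- σ_l) = ¼ (δ_{kl} − ω_k ω_l + i ε_{mkl} ω_m)`.
Multiplied by `ω_j`, the first two terms are odd under `ω ↦ −ω` and integrate to zero, while
`∫ ω_j ω_m = (4π/3) δ_{jm}` because the surface measure is invariant under coordinate
reflections and permutations.
-/

open Metric Set ComplexConjugate
open scoped Pointwise

namespace LinearIsometryEquiv

variable {E : Type*} [NormedAddCommGroup E] [NormedSpace ℝ E]

def unitSphereHomeomorph (L : E ≃ₗᵢ[ℝ] E) : sphere (0 : E) 1 ≃ₜ sphere (0 : E) 1 :=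
  L.toHomeomorph.subtype fun x => by simp

@[simp]
lemma coe_unitSphereHomeomorph (L : E ≃ₗᵢ[ℝ] E) (ω : sphere (0 : E) 1) :
    (L.unitSphereHomeomorph ω : E) = L ω := rfl

lemma smul_image_coe_preimage_unitSphereHomeomorph (L : E ≃ₗᵢ[ℝ] E) (r : Set ℝ)
    (s : Set (sphere (0 : E) 1)) :
    r • ((↑) '' (L.unitSphereHomeomorph ⁻¹' s) : Set E) = L ⁻¹' (r • ((↑) '' s)) := by
  ext x
  simp only [Set.mem_smul, Set.mem_image, Set.mem_preimage]
  constructor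
  · rintro ⟨c, hc, _, ⟨ω, hω, rfl⟩, rfl⟩
    exact ⟨c, hc, _, ⟨_, hω, rfl⟩, by simp⟩
  · rintro ⟨c, hc, _, ⟨ω, hω, rfl⟩, hx⟩
    refine ⟨c, hc, _, ⟨L.symm.unitSphereHomeomorph ω, ?_, rfl⟩, ?_⟩
    · convert hω; ext; simp
    · simpa using congrArg L.symm hx

end LinearIsometryEquiv

namespace MeasureTheory.Measure

variable {E F : Type*} [NormedAddCommGroup E] [NormedSpace ℝ E] [MeasurableSpace E]
  [BorelSpace E] [NormedAddCommGroup F] [NormedSpace ℝ F] {μ : Measure E} {L : E ≃ₗᵢ[ℝ] E}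

theorem measurePreserving_unitSphereHomeomorph (hL : MeasurePreserving L μ μ) :
    MeasurePreserving L.unitSphereHomeomorph μ.toSphere μ.toSphere := by
  have hmeas := L.unitSphereHomeomorph.measurable
  refine ⟨hmeas, ext fun s hs => ?_⟩
  rw [map_apply hmeas hs, toSphere_apply' _ hs, toSphere_apply' _ (hmeas hs),
    L.smul_image_coe_preimage_unitSphereHomeomorph,
    hL.measure_preimage_emb L.toHomeomorph.measurableEmbedding]

theorem integral_comp_unitSphereHomeomorph (hL : MeasurePreserving L μ μ)
    (f : sphere (0 : E) 1 → F) :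
    ∫ ω, f (L.unitSphereHomeomorph ω) ∂μ.toSphere = ∫ ω, f ω ∂μ.toSphere :=
  (measurePreserving_unitSphereHomeomorph hL).integral_comp
    L.unitSphereHomeomorph.measurableEmbedding f

theorem integral_toSphere_eq_zero_of_unitSphereHomeomorph_eq_neg (hL : MeasurePreserving L μ μ)
    {f : sphere (0 : E) 1 → F} (hf : ∀ ω, f (L.unitSphereHomeomorph ω) = -f ω) :
    ∫ ω, f ω ∂μ.toSphere = 0 := by
  have : IsAddTorsionFree F := .of_isTorsionFree ℝ F
  simp_rw [← self_eq_neg, ← integral_neg, ← hf, integral_comp_unitSphereHomeomorph hL]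

end MeasureTheory.Measure

namespace EuclideanSpace

open MeasureTheory.Measure

variable {ι : Type*} [Fintype ι]

lemma sum_sq_coe_unitSphere (ω : sphere (0 : EuclideanSpace ℝ ι) 1) :
    ∑ i, (ω : EuclideanSpace ℝ ι) i ^ 2 = 1 := by
  rw [← real_norm_sq_eq, norm_eq_of_mem_sphere, one_pow]

theorem integral_coord_mul_coord_toSphere [DecidableEq ι] (i j : ι) :
    ∫ ω, (ω : EuclideanSpace ℝ ι) i * (ω : EuclideanSpace ℝ ι) j
        ∂(volume : Measure (EuclideanSpace ℝ ι)).toSphere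
      = if i = j then (volume : Measure (EuclideanSpace ℝ ι)).toSphere.real univ / Fintype.card ι
        else 0 := by
  split_ifs with hij
  · subst hij
    have hswap : ∀ m, ∫ ω, (ω : EuclideanSpace ℝ ι) m ^ 2
          ∂(volume : Measure (EuclideanSpace ℝ ι)).toSphere
        = ∫ ω, (ω : EuclideanSpace ℝ ι) i ^ 2
          ∂(volume : Measure (EuclideanSpace ℝ ι)).toSphere := fun m => by
      simpa using integral_comp_unitSphereHomeomorph
        (LinearIsometryEquiv.piLpCongrLeft 2 ℝ ℝ (Equiv.swap m i)).measurePreserving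
        (fun ω => (ω : EuclideanSpace ℝ ι) i ^ 2)
    have hsum := integral_finsetSum (μ := (volume : Measure (EuclideanSpace ℝ ι)).toSphere)
      Finset.univ fun m _ => ((by fun_prop : Continuous fun ω : sphere (0 : EuclideanSpace ℝ ι) 1 =>
        (ω : EuclideanSpace ℝ ι) m ^ 2).integrable_of_hasCompactSupport
          (HasCompactSupport.of_compactSpace _))
    simp only [sum_sq_coe_unitSphere, integral_const, smul_eq_mul, mul_one, hswap,
      Finset.sum_const, Finset.card_univ, nsmul_eq_mul] at hsum
    have hcard : (Fintype.card ι : ℝ) ≠ 0 := Nat.cast_ne_zero.mpr (Fintype.card_pos_iff.mpr ⟨i⟩).ne'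
    simp only [hsum, mul_div_cancel_left₀ _ hcard, sq]
  · let L : EuclideanSpace ℝ ι ≃ₗᵢ[ℝ] EuclideanSpace ℝ ι :=
      LinearIsometryEquiv.piLpCongrRight 2
        fun m => if m = i then LinearIsometryEquiv.neg ℝ else LinearIsometryEquiv.refl ℝ ℝ
    refine integral_toSphere_eq_zero_of_unitSphereHomeomorph_eq_neg L.measurePreserving fun ω => ?_
    simp [L, Ne.symm hij]

end EuclideanSpace

namespace Matrix
variable {n α : Type*} [Fintype n] [CommRing α]

theorem dotProduct_mulVec_mul_dotProduct_mulVec (u v ψ φ : n → α) (A B : Matrix n n α) :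
    (u ⬝ᵥ A *ᵥ φ) * (v ⬝ᵥ B *ᵥ ψ) = trace (vecMulVec ψ u * A * vecMulVec φ v * B) := by
  rw [vecMulVec_mul, vecMulVec_mul_vecMulVec, vecMulVec_mul, trace_vecMulVec, smul_vecMul,
    dotProduct_smul, smul_eq_mul, dotProduct_comm ψ, dotProduct_mulVec, dotProduct_mulVec]

theorem star_star_dotProduct_mulVec [StarRing α] (ψ φ : n → α) (B : Matrix n n α) :
    star (star ψ ⬝ᵥ B *ᵥ φ) = star φ ⬝ᵥ Bᴴ *ᵥ ψ := by
  rw [star_dotProduct, star_star, star_mulVec, ← dotProduct_mulVec, dotProduct_comm]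

end Matrix

local notation "ℝ³" => EuclideanSpace ℝ (Fin 3)

def pauliDot (n : ℝ³) : Matrix (Fin 2) (Fin 2) ℂ :=
  ∑ i, ((n i : ℝ) : ℂ) • pauli i

lemma pauliDot_eq (n : ℝ³) :
    pauliDot n = !![(n 2 : ℂ), n 0 - I * n 1; n 0 + I * n 1, -(n 2 : ℂ)] := by
  ext i j
  fin_cases i <;> fin_cases j <;>
    simp [pauliDot, pauli, Fin.sum_univ_three, mul_comm, sub_eq_add_neg]

lemma pauliDot_neg (n : ℝ³) : pauliDot (-n) = -pauliDot n := by
  simp [pauliDot, Finset.sum_neg_distrib]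

lemma conjTranspose_pauli (k : Fin 3) : (pauli k)ᴴ = pauli k := by
  ext i j
  fin_cases k <;> fin_cases i <;> fin_cases j <;> simp [pauli]

theorem vecMulVec_star_eq_of_pauliDot_mulVec_eq_self (n : ℝ³)
    {ψ : Fin 2 → ℂ} (hψ : star ψ ⬝ᵥ ψ = 1) (h : pauliDot n *ᵥ ψ = ψ) :
    vecMulVec ψ (star ψ) = (1 / 2 : ℂ) • (1 + pauliDot n) := by
  have hN : conj (ψ 0) * ψ 0 + conj (ψ 1) * ψ 1 = 1 := by
    simpa [dotProduct, Fin.sum_univ_two] using hψ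
  have h0 := congrFun h 0
  have h1 := congrFun h 1
  simp only [pauliDot_eq, mulVec, dotProduct, Fin.sum_univ_two, of_apply, cons_val', cons_val_zero,
    cons_val_one, cons_val_fin_one] at h0 h1
  have h0c := congrArg conj h0
  have h1c := congrArg conj h1
  simp only [map_add, map_mul, map_sub, map_neg, conj_ofReal, conj_I] at h0c h1c
  have hdiff : ψ 0 * conj (ψ 0) - ψ 1 * conj (ψ 1) = n 2 := by
    linear_combination (-conj (ψ 0)) * h0 + ψ 1 * h1c + (n 2 : ℂ) * hN
  ext i j
  fin_cases i <;> fin_cases j <;>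
    simp only [Fin.zero_eta, Fin.mk_one, vecMulVec_apply, Pi.star_apply, RCLike.star_def,
      pauliDot_eq, Matrix.smul_apply, Matrix.add_apply, one_apply_eq, one_apply_ne, ne_eq,
      zero_ne_one, one_ne_zero, not_false_eq_true, of_apply, cons_val', cons_val_zero,
      cons_val_one, cons_val_fin_one, smul_eq_mul]
  · linear_combination (hdiff + hN) / 2
  · linear_combination (-conj (ψ 1) / 2) * h0 + (-ψ 0 / 2) * h1c + ((n 0 - I * n 1) / 2) * hN
  · linear_combination (-ψ 1 / 2) * h0c + (-conj (ψ 0) / 2) * h1 + ((n 0 + I * n 1) / 2) * hN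
  · linear_combination (hN - hdiff) / 2

theorem vecMulVec_star_eq_of_pauliDot_mulVec_eq_neg (n : ℝ³)
    {ψ : Fin 2 → ℂ} (hψ : star ψ ⬝ᵥ ψ = 1) (h : pauliDot n *ᵥ ψ = -ψ) :
    vecMulVec ψ (star ψ) = (1 / 2 : ℂ) • (1 - pauliDot n) := by
  rw [sub_eq_add_neg, ← pauliDot_neg]
  exact vecMulVec_star_eq_of_pauliDot_mulVec_eq_self (-n) hψ
    (by rw [pauliDot_neg, neg_mulVec, h, neg_neg])

theorem trace_pauli_sandwich (n : ℝ³) (k l : Fin 3) :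
    trace ((1 + pauliDot n) * pauli k * (1 - pauliDot n) * pauli l)
      = 2 * (1 + ∑ i, (n i : ℂ) ^ 2) * (if k = l then 1 else 0) - 4 * n k * n l
        + 4 * I * ∑ m, (leviCivita m k l : ℂ) * n m := by
  fin_cases k <;> fin_cases l <;>
    simp [pauliDot_eq, pauli, trace, Fin.sum_univ_two, Fin.sum_univ_three, leviCivita,
      Matrix.mul_apply] <;> ring_nf <;> simp only [I_sq, I_pow_four] <;> ring

theorem pauli_matrixElement_mul_conj (n : ℝ³) (hn : ∑ i, n i ^ 2 = 1)
    {ψp ψm : Fin 2 → ℂ} (hnormp : star ψp ⬝ᵥ ψp = 1) (hnormm : star ψm ⬝ᵥ ψm = 1)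
    (heigp : pauliDot n *ᵥ ψp = ψp) (heigm : pauliDot n *ᵥ ψm = -ψm) (k l : Fin 3) :
    (star ψp ⬝ᵥ ((1 / 2 : ℂ) • pauli k) *ᵥ ψm) * conj (star ψp ⬝ᵥ ((1 / 2 : ℂ) • pauli l) *ᵥ ψm)
      = ((if k = l then 1 else 0) - n k * n l + I * ∑ m, (leviCivita m k l : ℂ) * n m) / 4 := by
  have hnC : ∑ i, (n i : ℂ) ^ 2 = 1 := by exact_mod_cast hn
  rw [← star_def, star_star_dotProduct_mulVec, dotProduct_mulVec_mul_dotProduct_mulVec,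
    vecMulVec_star_eq_of_pauliDot_mulVec_eq_self n hnormp heigp,
    vecMulVec_star_eq_of_pauliDot_mulVec_eq_neg n hnormm heigm]
  simp only [Matrix.smul_mul, Matrix.mul_smul, trace_smul, conjTranspose_smul,
    conjTranspose_pauli, star_div₀, star_one, star_ofNat, trace_pauli_sandwich, hnC, smul_eq_mul]
  split_ifs <;> ring

instance : IsFiniteMeasure sphereMeasure := by
  unfold sphereMeasure; infer_instance

lemma sphereMeasure_real_univ : sphereMeasure.real univ = 4 * Real.pi := by
  rw [sphereMeasure, Measure.toSphere_real_apply_univ, finrank_euclideanSpace, Fintype.card_fin,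
    measureReal_def, EuclideanSpace.volume_ball_fin_three, ENNReal.ofReal_one, one_pow, one_mul,
    ENNReal.toReal_ofReal (by positivity)]
  ring

theorem integral_coord_mul_coord_sphereMeasure (j m : Fin 3) :
    ∫ ω, (((ω : ℝ³) j : ℝ) : ℂ) * (ω : ℝ³) m ∂sphereMeasure
      = if j = m then ((4 * Real.pi / 3 : ℝ) : ℂ) else 0 := by
  calc ∫ ω, (((ω : ℝ³) j : ℝ) : ℂ) * (ω : ℝ³) m ∂sphereMeasure
      = ((∫ ω, (ω : ℝ³) j * (ω : ℝ³) m ∂sphereMeasure : ℝ) : ℂ) := by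
        simp only [← ofReal_mul]; exact integral_ofReal
    _ = _ := by
      rw [sphereMeasure, EuclideanSpace.integral_coord_mul_coord_toSphere, ← sphereMeasure,
        sphereMeasure_real_univ]
      split_ifs <;> norm_num

theorem integral_coord_mul_pauli_matrixElement_kernel (j k l : Fin 3) :
    ∫ ω, (((ω : ℝ³) j : ℝ) : ℂ) * (((if k = l then 1 else 0) - (ω : ℝ³) k * (ω : ℝ³) l
        + I * ∑ m, (leviCivita m k l : ℂ) * (ω : ℝ³) m) / 4) ∂sphereMeasure
      = I * (Real.pi / 3 : ℝ) * (leviCivita j k l : ℝ) := by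
  have hint : ∀ {f : sphere (0 : ℝ³) 1 → ℂ}, Continuous f → Integrable f sphereMeasure :=
    fun hf => hf.integrable_of_hasCompactSupport (.of_compactSpace _)
  have hodd : ∫ ω, (((ω : ℝ³) j : ℝ) : ℂ) * ((if k = l then 1 else 0) - (ω : ℝ³) k * (ω : ℝ³) l)
      ∂sphereMeasure = 0 :=
    Measure.integral_toSphere_eq_zero_of_unitSphereHomeomorph_eq_neg
      (LinearIsometryEquiv.neg ℝ).measurePreserving fun ω => by simp
  calc _ = ∫ ω, (1 / 4 : ℂ) * ((((ω : ℝ³) j : ℝ) : ℂ) * ((if k = l then 1 else 0)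
          - (ω : ℝ³) k * (ω : ℝ³) l)) + ∑ m, (I / 4 * leviCivita m k l)
          * ((((ω : ℝ³) j : ℝ) : ℂ) * (ω : ℝ³) m) ∂sphereMeasure :=
        integral_congr_ae (.of_forall fun ω => by simp only [Fin.sum_univ_three]; ring)
    _ = ∑ m, (I / 4 * leviCivita m k l) * if j = m then ((4 * Real.pi / 3 : ℝ) : ℂ) else 0 := by
        rw [integral_add ((hint (by fun_prop)).const_mul _)
            (integrable_finsetSum _ fun m _ => (hint (by fun_prop)).const_mul _),
          integral_const_mul, hodd, mul_zero, zero_add,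
          integral_finsetSum _ fun m _ => (hint (by fun_prop)).const_mul _]
        simp only [integral_const_mul, integral_coord_mul_coord_sphereMeasure]
    _ = _ := by
        simp only [mul_ite, mul_zero, Finset.sum_ite_eq, Finset.mem_univ, if_true]
        push_cast
        ring

theorem weyl_sphere_integral_omega_DD_general
    (Ψp Ψm : Metric.sphere (0 : EuclideanSpace ℝ (Fin 3)) 1 → (Fin 2 → ℂ))
    (hnormp : ∀ ω, star (Ψp ω) ⬝ᵥ Ψp ω = 1)
    (hnormm : ∀ ω, star (Ψm ω) ⬝ᵥ Ψm ω = 1)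
    (heigp : ∀ ω : Metric.sphere (0 : EuclideanSpace ℝ (Fin 3)) 1,
      (∑ i, (((ω : EuclideanSpace ℝ (Fin 3)) i : ℝ) : ℂ) • pauli i) *ᵥ Ψp ω = Ψp ω)
    (heigm : ∀ ω : Metric.sphere (0 : EuclideanSpace ℝ (Fin 3)) 1,
      (∑ i, (((ω : EuclideanSpace ℝ (Fin 3)) i : ℝ) : ℂ) • pauli i) *ᵥ Ψm ω = -(Ψm ω))
    (D : Fin 3 → Metric.sphere (0 : EuclideanSpace ℝ (Fin 3)) 1 → ℂ)
    (hD : ∀ k ω, D k ω = star (Ψp ω) ⬝ᵥ ((((1:ℂ)/2) • pauli k) *ᵥ Ψm ω)) :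
    ∀ j k l, ∫ ω, (((ω : EuclideanSpace ℝ (Fin 3)) j : ℝ) : ℂ)
        * D k ω * starRingEnd ℂ (D l ω) ∂sphereMeasure
      = Complex.I * (Real.pi / 3 : ℝ) * (leviCivita j k l : ℝ) := by
  intro j k l
  have hDD : ∀ ω : sphere (0 : ℝ³) 1, D k ω * conj (D l ω) = ((if k = l then 1 else 0)
      - (ω : ℝ³) k * (ω : ℝ³) l + I * ∑ m, (leviCivita m k l : ℂ) * (ω : ℝ³) m) / 4 := fun ω => by
    rw [hD, hD]
    exact pauli_matrixElement_mul_conj ω (EuclideanSpace.sum_sq_coe_unitSphere ω)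
      (hnormp ω) (hnormm ω) (heigp ω) (heigm ω) k l
  refine (integral_congr_ae (.of_forall fun ω => ?_)).trans
    (integral_coord_mul_pauli_matrixElement_kernel j k l)
  rw [mul_assoc, hDD]

/-- for the Weyl Hamiltonian `H(p) = ½ p·σ`, the matrix elements
`D^k_{+−}(ω) = ⟨Ψ_+(ω), ½σ_k Ψ_−(ω)⟩` satisfy
`∫_{S²} ω^j D^k_{+−}(ω) D^l_{−+}(ω) dω = (iπ/3) ε_{jkl}` for all `j,k,l`. -/
theorem weyl_sphere_integral_omega_DD
    (Ψp Ψm : Metric.sphere (0 : EuclideanSpace ℝ (Fin 3)) 1 → (Fin 2 → ℂ))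
    (hmeasp : Measurable Ψp) (hmeasm : Measurable Ψm)
    (hnormp : ∀ ω, star (Ψp ω) ⬝ᵥ Ψp ω = 1)
    (hnormm : ∀ ω, star (Ψm ω) ⬝ᵥ Ψm ω = 1)
    (heigp : ∀ ω : Metric.sphere (0 : EuclideanSpace ℝ (Fin 3)) 1,
      (∑ i, (((ω : EuclideanSpace ℝ (Fin 3)) i : ℝ) : ℂ) • pauli i) *ᵥ Ψp ω = Ψp ω)
    (heigm : ∀ ω : Metric.sphere (0 : EuclideanSpace ℝ (Fin 3)) 1,
      (∑ i, (((ω : EuclideanSpace ℝ (Fin 3)) i : ℝ) : ℂ) • pauli i) *ᵥ Ψm ω = -(Ψm ω))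
    (D : Fin 3 → Metric.sphere (0 : EuclideanSpace ℝ (Fin 3)) 1 → ℂ)
    (hD : ∀ k ω, D k ω = star (Ψp ω) ⬝ᵥ ((((1:ℂ)/2) • pauli k) *ᵥ Ψm ω)) :
    ∀ j k l, ∫ ω, (((ω : EuclideanSpace ℝ (Fin 3)) j : ℝ) : ℂ)
        * D k ω * starRingEnd ℂ (D l ω) ∂sphereMeasure
      = Complex.I * (Real.pi / 3 : ℝ) * (leviCivita j k l : ℝ) :=
  weyl_sphere_integral_omega_DD_general Ψp Ψm hnormp hnormm heigp heigm D hD
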